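/- arXiv:2006.00542 — 3 statements merged into one kernel-verified Lean document; each statement's English description precedes it below -/
import Mathlib

section
/- Let $G$ be a finite group acting on a unital C*-algebra $A$ by automorphisms $\alpha : G \to \mathrm{Aut}(A)$, and let $A^\alpha = \{a \in A : \alpha_g(a) = a \text{ for all } g\}$ be the fixed point algebra. Suppose there is a sequence of unital linear maps $\psi_j : A \to A^\alpha$ such that $\|\psi_j(a) - a\| \to 0$ for all $a \in A^\alpha$ and $\|\psi_j(ab) - \psi_j(a)\psi_j(b)\| \to 0$ for all $a,b \in A$. If $n \geq 1$ is such that $GL_n(A)$ acts transitively on $Lg_n(A)$, then $GL_n(A^\alpha)$ acts transitively on $Lg_n(A^\alpha)$; in particular $gsr(A^\alpha) \leq gsr(A)$. -/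
/-!
Transitivity is carried over from `A` to `A^α` by approximation. Given left unimodular `v`, `w`
over `A^α` and `T ∈ GL_n(A)` with `T v = w`, the matrix `ψ_j(T)` is invertible for large `j`,
because `ψ_j(T) ψ_j(T⁻¹) → 1` (and symmetrically) while the invertible matrices form an open set;
it sends `ψ_j(v) ≈ v` to a vector close to `w`. A vector `x` close to a unimodular `u` with
`b u = 1` lies in the orbit of `u`, through the invertible matrix `1 + (x - u) bᵀ`. All matrices
involved have entries in `A^α`, and so do their inverses, since the inverse of an `α`-fixed
invertible matrix is again fixed.
-/

/-- A vector `v ∈ Aⁿ` is left unimodular if `∑ i, b i * v i = 1` for some `b`. -/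
def IsLeftUnimodular {A : Type*} [Ring A] {n : ℕ} (v : Fin n → A) : Prop :=
  ∃ b : Fin n → A, ∑ i, b i * v i = 1

/-- `GL_n(A)` acts transitively on `Lg_n(A)`. -/
def GLActsTransitively (A : Type*) [Ring A] (n : ℕ) : Prop :=
  ∀ v w : Fin n → A, IsLeftUnimodular v → IsLeftUnimodular w →
    ∃ T : (Matrix (Fin n) (Fin n) A)ˣ, T.val.mulVec v = w

/-- The general stable rank: the least `n ≥ 1` such that `GL_m` acts transitively on
`Lg_m` for all `m ≥ n` (`⊤` if there is no such `n`). -/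
noncomputable def gsr (A : Type*) [Ring A] : ℕ∞ :=
  sInf {n : ℕ∞ | 1 ≤ n ∧ ∀ m : ℕ, n ≤ (m : ℕ∞) → GLActsTransitively A m}

/-- The fixed point subalgebra `A^α` of an action `α` of a group `G` on `A`. -/
def fixedSubalgebra {A : Type*} [NormedRing A] [NormedAlgebra ℂ A] {G : Type*} [Group G]
    (α : G →* (A ≃ₐ[ℂ] A)) : Subalgebra ℂ A where
  carrier := {a | ∀ g, α g a = a}
  mul_mem' := by intro a b ha hb g; rw [map_mul, ha g, hb g]
  add_mem' := by intro a b ha hb g; rw [map_add, ha g, hb g]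
  algebraMap_mem' := by intro r g; exact (α g).commutes r

open Filter Topology Matrix

theorem IsUnit.of_mul_of_mul_swap {M : Type*} [Monoid M] {x y : M}
    (hxy : IsUnit (x * y)) (hyx : IsUnit (y * x)) : IsUnit x := by
  obtain ⟨u, hu⟩ := hxy
  obtain ⟨v, hv⟩ := hyx
  exact isUnit_iff_exists_and_exists.2
    ⟨⟨y * ↑u⁻¹, by rw [← mul_assoc, ← hu, u.mul_inv]⟩,
      ⟨↑v⁻¹ * y, by rw [mul_assoc, ← hv, v.inv_mul]⟩⟩

theorem Units.exists_map_eq_of_injective {M N : Type*} [Monoid M] [Monoid N] {f : M →* N}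
    (hf : Function.Injective f) (u : Nˣ) (hu : ↑u ∈ Set.range f) (hu' : ↑u⁻¹ ∈ Set.range f) :
    ∃ v : Mˣ, Units.map f v = u := by
  obtain ⟨a, ha⟩ := hu
  obtain ⟨b, hb⟩ := hu'
  refine ⟨⟨a, b, hf ?_, hf ?_⟩, Units.ext ha⟩
  · rw [map_mul, ha, hb, map_one, u.mul_inv]
  · rw [map_mul, ha, hb, map_one, u.inv_mul]

theorem Matrix.isOpen_setOf_isUnit {A : Type*} [NormedRing A] [CompleteSpace A]
    {m : Type*} [Fintype m] [DecidableEq m] :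
    IsOpen {M : Matrix m m A | IsUnit M} := by
  let _ := Matrix.linftyOpNormedRing (α := A) (n := m)
  have : @CompleteSpace (Matrix m m A) PseudoMetricSpace.toUniformSpace :=
    (inferInstance : CompleteSpace (m → m → A))
  exact Units.isOpen

theorem Matrix.one_add_vecMulVec_sub_mulVec {A : Type*} [Ring A] {m : Type*} [Fintype m]
    [DecidableEq m] {v b : m → A} (hbv : b ⬝ᵥ v = 1) (x : m → A) :
    (1 + vecMulVec (x - v) b) *ᵥ v = x := by
  rw [add_mulVec, one_mulVec, vecMulVec_mulVec, hbv, MulOpposite.op_one, one_smul,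
    add_sub_cancel]

theorem Subalgebra.mulVec_mem {R A : Type*} [CommSemiring R] [Semiring A] [Algebra R A]
    {m : Type*} [Fintype m] [DecidableEq m] {B : Subalgebra R A} {M : Matrix m m A}
    (hM : M ∈ B.matrix) {v : m → A} (hv : ∀ i, v i ∈ B) (i : m) : (M *ᵥ v) i ∈ B :=
  B.sum_mem fun k _ => B.mul_mem (hM i k) (hv k)

theorem Subalgebra.exists_units_map_eq {R A : Type*} [CommSemiring R] [Semiring A] [Algebra R A]
    {m : Type*} [Fintype m] [DecidableEq m] {B : Subalgebra R A} (P : (Matrix m m A)ˣ)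
    (hP : (P : Matrix m m A) ∈ B.matrix) (hP' : (↑P⁻¹ : Matrix m m A) ∈ B.matrix) :
    ∃ U : (Matrix m m B)ˣ, (U : Matrix m m B).map B.val = P := by
  let f : Matrix m m B →* Matrix m m A := (B.val.mapMatrix : Matrix m m B →ₐ[R] Matrix m m A)
  have hrange {M : Matrix m m A} (hM : M ∈ B.matrix) : M ∈ Set.range f :=
    ⟨of fun i k => ⟨M i k, hM i k⟩, rfl⟩
  have hinj : Function.Injective f :=
    fun X Y h => Matrix.ext fun i k => Subtype.ext (congrFun₂ h i k)
  obtain ⟨U, hU⟩ := Units.exists_map_eq_of_injective hinj P (hrange hP) (hrange hP')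
  exact ⟨U, congrArg Units.val hU⟩

section AsymptoticallyMultiplicative

variable {R A : Type*} [CommRing R] [Ring A] [Algebra R A] [TopologicalSpace A]
  [IsTopologicalRing A] {ι : Type*} {l : Filter ι} {ψ : ι → A →ₗ[R] A}

theorem tendsto_dotProduct_map_sub_map_dotProduct {m : Type*} [Fintype m]
    (hmul : ∀ a b : A, Tendsto (fun j => ψ j a * ψ j b - ψ j (a * b)) l (𝓝 0)) (a b : m → A) :
    Tendsto (fun j => (ψ j ∘ a) ⬝ᵥ (ψ j ∘ b) - ψ j (a ⬝ᵥ b)) l (𝓝 0) := by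
  simp only [dotProduct, map_sum, ← Finset.sum_sub_distrib, Function.comp_apply]
  simpa using tendsto_finsetSum Finset.univ fun k _ => hmul (a k) (b k)

theorem tendsto_map_mul_map_sub_map_mul {m : Type*} [Fintype m]
    (hmul : ∀ a b : A, Tendsto (fun j => ψ j a * ψ j b - ψ j (a * b)) l (𝓝 0))
    (X Y : Matrix m m A) :
    Tendsto (fun j => X.map (ψ j) * Y.map (ψ j) - (X * Y).map (ψ j)) l (𝓝 0) :=
  tendsto_pi_nhds.2 fun i => tendsto_pi_nhds.2 fun k =>
    tendsto_dotProduct_map_sub_map_dotProduct hmul (X i) (fun p => Y p k)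

theorem tendsto_map_mulVec_map_sub_map_mulVec {m : Type*} [Fintype m]
    (hmul : ∀ a b : A, Tendsto (fun j => ψ j a * ψ j b - ψ j (a * b)) l (𝓝 0)) (X : Matrix m m A)
    (v : m → A) :
    Tendsto (fun j => X.map (ψ j) *ᵥ (ψ j ∘ v) - ψ j ∘ (X *ᵥ v)) l (𝓝 0) :=
  tendsto_pi_nhds.2 fun i => tendsto_dotProduct_map_sub_map_dotProduct hmul (X i) v

end AsymptoticallyMultiplicative

section Approximation

variable {R A : Type*} [CommRing R] [NormedRing A] [CompleteSpace A] [Algebra R A]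
  {ι : Type*} {l : Filter ι} {ψ : ι → A →ₗ[R] A} {m : Type*} [Fintype m] [DecidableEq m]

theorem eventually_isUnit_map_of_tendsto_mul (hone : ∀ j, ψ j 1 = 1)
    (hmul : ∀ a b : A, Tendsto (fun j => ψ j a * ψ j b - ψ j (a * b)) l (𝓝 0))
    (T : (Matrix m m A)ˣ) : ∀ᶠ j in l, IsUnit ((T : Matrix m m A).map (ψ j)) := by
  have hmap_one j : (1 : Matrix m m A).map (ψ j) = 1 := Matrix.map_one _ (map_zero _) (hone j)
  have hunit {X Y : Matrix m m A} (hXY : X * Y = 1) :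
      ∀ᶠ j in l, IsUnit (X.map (ψ j) * Y.map (ψ j)) := by
    have h := tendsto_map_mul_map_sub_map_mul hmul X Y
    simp only [hXY, hmap_one] at h
    exact tendsto_sub_nhds_zero_iff.1 h |>.eventually
      (Matrix.isOpen_setOf_isUnit.mem_nhds isUnit_one)
  filter_upwards [hunit T.mul_inv, hunit T.inv_mul] with j h₁ h₂ using h₁.of_mul_of_mul_swap h₂

theorem eventually_isUnit_one_add_vecMulVec {x : ι → m → A} {v : m → A} (hx : Tendsto x l (𝓝 v))
    (b : m → A) : ∀ᶠ j in l, IsUnit (1 + vecMulVec (x j - v) b) := by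
  have hc : Continuous fun y : m → A => 1 + vecMulVec (y - v) b := by fun_prop
  have h : Tendsto (fun j => 1 + vecMulVec (x j - v) b) l (𝓝 (1 + vecMulVec (v - v) b)) :=
    (hc.tendsto v).comp hx
  rw [sub_self, zero_vecMulVec, add_zero] at h
  exact h.eventually (Matrix.isOpen_setOf_isUnit.mem_nhds isUnit_one)

theorem exists_unit_mem_matrix_mulVec_eq {B : Subalgebra R A} [l.NeBot]
    (hψB : ∀ j a, ψ j a ∈ B) (hone : ∀ j, ψ j 1 = 1)
    (hid : ∀ a ∈ B, Tendsto (fun j => ψ j a) l (𝓝 a))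
    (hmul : ∀ a b : A, Tendsto (fun j => ψ j a * ψ j b - ψ j (a * b)) l (𝓝 0))
    (hinv : ∀ P : (Matrix m m A)ˣ, (P : Matrix m m A) ∈ B.matrix →
      (↑P⁻¹ : Matrix m m A) ∈ B.matrix)
    {v w bv bw : m → A} (hv : ∀ i, v i ∈ B) (hw : ∀ i, w i ∈ B) (hbv : ∀ i, bv i ∈ B)
    (hbw : ∀ i, bw i ∈ B) (hbv₁ : bv ⬝ᵥ v = 1) (hbw₁ : bw ⬝ᵥ w = 1)
    (T : (Matrix m m A)ˣ) (hT : (T : Matrix m m A) *ᵥ v = w) :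
    ∃ P : (Matrix m m A)ˣ, (P : Matrix m m A) ∈ B.matrix ∧ (P : Matrix m m A) *ᵥ v = w := by
  set x : ι → m → A := fun j => ψ j ∘ v
  set y : ι → m → A := fun j => (T : Matrix m m A).map (ψ j) *ᵥ x j
  have hx : Tendsto x l (𝓝 v) := tendsto_pi_nhds.2 fun i => hid _ (hv i)
  have hy : Tendsto y l (𝓝 w) := by
    have hψw : Tendsto (fun j => ψ j ∘ w) l (𝓝 w) := tendsto_pi_nhds.2 fun i => hid _ (hw i)
    simpa [hT] using (tendsto_map_mulVec_map_sub_map_mulVec hmul (T : Matrix m m A) v).add hψw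
  have hSB j : (T : Matrix m m A).map (ψ j) ∈ B.matrix := fun _ _ => hψB j _
  have hyB j : ∀ i, y j i ∈ B := B.mulVec_mem (hSB j) fun _ => hψB j _
  have hpertB {z u b : m → A} (hz : ∀ i, z i ∈ B) (hu : ∀ i, u i ∈ B) (hb : ∀ i, b i ∈ B) :
      1 + vecMulVec (z - u) b ∈ B.matrix :=
    add_mem (one_mem _) (show vecMulVec (z - u) b ∈ B.matrix from
      fun i k => B.mul_mem (B.sub_mem (hz i) (hu i)) (hb k))
  -- `E` moves `v` to `x j`, `S` moves `x j` to `y j`, and `F` moves `w` to `y j`.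
  obtain ⟨j, ⟨S, hS⟩, ⟨E, hE⟩, ⟨F, hF⟩⟩ := ((eventually_isUnit_map_of_tendsto_mul hone hmul T).and
    ((eventually_isUnit_one_add_vecMulVec hx bv).and
      (eventually_isUnit_one_add_vecMulVec hy bw))).exists
  refine ⟨F⁻¹ * S * E, ?_, ?_⟩
  · have hFB : (↑F⁻¹ : Matrix m m A) ∈ B.matrix := hinv F (hF ▸ hpertB (hyB j) hw hbw)
    rw [Units.val_mul, Units.val_mul, hS, hE]
    exact mul_mem (mul_mem hFB (hSB j)) (hpertB (fun _ => hψB j _) hv hbv)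
  · have hFw : (F : Matrix m m A) *ᵥ w = y j := hF ▸ one_add_vecMulVec_sub_mulVec hbw₁ (y j)
    rw [Units.val_mul, Units.val_mul, ← mulVec_mulVec, ← mulVec_mulVec, hE,
      one_add_vecMulVec_sub_mulVec hbv₁, hS]
    change (↑F⁻¹ : Matrix m m A) *ᵥ y j = w
    rw [← hFw, mulVec_mulVec, Units.inv_mul, one_mulVec]

theorem GLActsTransitively.of_tendsto {B : Subalgebra R A} [l.NeBot]
    (hψB : ∀ j a, ψ j a ∈ B) (hone : ∀ j, ψ j 1 = 1)
    (hid : ∀ a ∈ B, Tendsto (fun j => ψ j a) l (𝓝 a))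
    (hmul : ∀ a b : A, Tendsto (fun j => ψ j a * ψ j b - ψ j (a * b)) l (𝓝 0)) {n : ℕ}
    (hinv : ∀ P : (Matrix (Fin n) (Fin n) A)ˣ, (P : Matrix (Fin n) (Fin n) A) ∈ B.matrix →
      (↑P⁻¹ : Matrix (Fin n) (Fin n) A) ∈ B.matrix)
    (hA : GLActsTransitively A n) : GLActsTransitively B n := by
  rintro v w ⟨bv, hbv⟩ ⟨bw, hbw⟩
  have hunimod {u b : Fin n → B} (h : ∑ i, b i * u i = 1) : (B.val ∘ b) ⬝ᵥ (B.val ∘ u) = 1 := by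
    simpa [dotProduct] using congrArg B.val h
  obtain ⟨T, hT⟩ := hA (B.val ∘ v) (B.val ∘ w) ⟨_, hunimod hbv⟩ ⟨_, hunimod hbw⟩
  obtain ⟨P, hPB, hP⟩ := exists_unit_mem_matrix_mulVec_eq hψB hone hid hmul hinv
    (fun i => (v i).2) (fun i => (w i).2) (fun i => (bv i).2) (fun i => (bw i).2)
    (hunimod hbv) (hunimod hbw) T hT
  obtain ⟨U, hU⟩ := B.exists_units_map_eq P hPB (hinv P hPB)
  refine ⟨U, funext fun i => Subtype.ext ?_⟩
  rw [← congrFun hP i, ← hU]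
  exact RingHom.map_mulVec B.val.toRingHom _ _ i

end Approximation

section FixedPoints

variable {A : Type*} [NormedRing A] [NormedAlgebra ℂ A] {G : Type*} [Group G]
  (α : G →* (A ≃ₐ[ℂ] A)) {m : Type*} [Fintype m] [DecidableEq m]

theorem mem_matrix_fixedSubalgebra_iff {M : Matrix m m A} :
    M ∈ (fixedSubalgebra α).matrix ↔ ∀ g, (α g).mapMatrix M = M :=
  ⟨fun h g => Matrix.ext fun i k => h i k g, fun h i k g => congrFun₂ (h g) i k⟩

theorem units_inv_mem_matrix_fixedSubalgebra (P : (Matrix m m A)ˣ)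
    (hP : (P : Matrix m m A) ∈ (fixedSubalgebra α).matrix) :
    (↑P⁻¹ : Matrix m m A) ∈ (fixedSubalgebra α).matrix := by
  rw [mem_matrix_fixedSubalgebra_iff] at hP ⊢
  intro g
  let f : Matrix m m A →* Matrix m m A := ((α g).mapMatrix : Matrix m m A ≃ₐ[ℂ] Matrix m m A)
  have hfix : Units.map f P = P := Units.ext (hP g)
  calc f ↑P⁻¹ = ↑(Units.map f P)⁻¹ := (Units.coe_map_inv f P).symm
    _ = ↑P⁻¹ := by rw [hfix]

end FixedPoints

theorem gsr_le_gsr_of_forall_glActsTransitively {A B : Type*} [Ring A] [Ring B]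
    (h : ∀ n, GLActsTransitively A n → GLActsTransitively B n) : gsr B ≤ gsr A :=
  sInf_le_sInf fun _ ⟨h₁, h₂⟩ => ⟨h₁, fun m hm => h m (h₂ m hm)⟩

theorem stmt_13_general {A : Type*} [NormedRing A]
    [NormedAlgebra ℂ A] [CompleteSpace A]
    {G : Type*} [Group G] (α : G →* (A ≃ₐ[ℂ] A))
    (ψ : ℕ → A →ₗ[ℂ] A)
    (hψfix : ∀ j a, ψ j a ∈ fixedSubalgebra α)
    (hψone : ∀ j, ψ j 1 = 1)
    (hψid : ∀ a ∈ fixedSubalgebra α,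
      Filter.Tendsto (fun j => ‖ψ j a - a‖) Filter.atTop (nhds 0))
    (hψmul : ∀ a b : A,
      Filter.Tendsto (fun j => ‖ψ j (a * b) - ψ j a * ψ j b‖) Filter.atTop (nhds 0)) :
    (∀ n : ℕ, GLActsTransitively A n → GLActsTransitively (fixedSubalgebra α) n) ∧
      gsr (fixedSubalgebra α) ≤ gsr A := by
  have htrans n : GLActsTransitively A n → GLActsTransitively (fixedSubalgebra α) n :=
    GLActsTransitively.of_tendsto hψfix hψone
      (fun a ha => tendsto_iff_norm_sub_tendsto_zero.2 (hψid a ha))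
      (fun a b => tendsto_zero_iff_norm_tendsto_zero.2 <| by
        simpa only [norm_sub_rev] using hψmul a b)
      (units_inv_mem_matrix_fixedSubalgebra α)
  exact ⟨htrans, gsr_le_gsr_of_forall_glActsTransitively htrans⟩

/-- Let a finite group `G` act on a unital C*-algebra `A` by `α`, with fixed point
algebra `A^α`.  Suppose there are unital linear maps `ψ_j : A → A^α` with
`‖ψ_j a - a‖ → 0` for `a ∈ A^α` and `‖ψ_j (a b) - ψ_j a · ψ_j b‖ → 0` for all `a, b`.
If `GL_n(A)` acts transitively on `Lg_n(A)`, then `GL_n(A^α)` acts transitively on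
`Lg_n(A^α)`; in particular `gsr (A^α) ≤ gsr A`. -/
theorem stmt_13 {A : Type*} [NormedRing A] [StarRing A] [CStarRing A]
    [NormedAlgebra ℂ A] [CompleteSpace A] [StarModule ℂ A]
    {G : Type*} [Group G] [Finite G] (α : G →* (A ≃ₐ[ℂ] A))
    (hstar : ∀ g (a : A), α g (star a) = star (α g a))
    (ψ : ℕ → A →ₗ[ℂ] A)
    (hψfix : ∀ j a, ψ j a ∈ fixedSubalgebra α)
    (hψone : ∀ j, ψ j 1 = 1)
    (hψid : ∀ a ∈ fixedSubalgebra α,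
      Filter.Tendsto (fun j => ‖ψ j a - a‖) Filter.atTop (nhds 0))
    (hψmul : ∀ a b : A,
      Filter.Tendsto (fun j => ‖ψ j (a * b) - ψ j a * ψ j b‖) Filter.atTop (nhds 0)) :
    (∀ n : ℕ, GLActsTransitively A n → GLActsTransitively (fixedSubalgebra α) n) ∧
      gsr (fixedSubalgebra α) ≤ gsr A :=
  stmt_13_general α ψ hψfix hψone hψid hψmul
end

section
/- Let $A$ be a unital C*-algebra, $n \geq 1$, and $v \in Lg_n(A)$. The orbit $GL_n^0(A) \cdot v \subseteq A^n$ is both open and closed in $Lg_n(A)$ (with the subspace topology from $A^n$). Consequently, if $Lg_n(A)$ is connected and contains $e_n = (0,\ldots,0,1)$, then $GL_n^0(A)$ acts transitively on $Lg_n(A)$ if and only if every orbit meets every other orbit's closure; in particular connectedness of $Lg_n(A)$ implies transitivity of the $GL_n^0(A)$-action given that orbits are open. -/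
/-- `GL_n^0(A)` acts transitively on `Lg_n(A)`. -/
def GLZeroActsTransitively (A : Type*) [Ring A] [TopologicalSpace A] (n : ℕ) : Prop :=
  ∀ v w : Fin n → A, IsLeftUnimodular v → IsLeftUnimodular w →
    ∃ T : (Matrix (Fin n) (Fin n) A)ˣ,
      T ∈ connectedComponent (1 : (Matrix (Fin n) (Fin n) A)ˣ) ∧ T.val.mulVec v = w

/-! If `b ⬝ᵥ w = 1` and `w'` is close to `w`, the elementary matrix
`1 + (w' - w) bᵀ` sends `w` to `w'`; it is invertible as long as `1 + b ⬝ᵥ (w' - w)` is, and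
scaling `w' - w` down to `0` joins it to `1` inside `GL_n`. So every orbit of `GL_n^0(A)` on
`Lg_n(A)` is open, hence so is the complement of an orbit, and a connected `Lg_n(A)` is a
single orbit. -/

open Matrix Filter Topology

theorem isUnit_one_add_of_norm_lt_one {R : Type*} [NormedRing R] [HasSummableGeomSeries R]
    {t : R} (h : ‖t‖ < 1) : IsUnit (1 + t) :=
  sub_neg_eq_add 1 t ▸ isUnit_one_sub_of_norm_lt_one (by rwa [norm_neg])

namespace Matrix

section Ring

variable {A : Type*} [Ring A] {n : Type*} [Fintype n] [DecidableEq n]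

def oneAddVecMulVecUnit (u b : n → A) (e : Aˣ) (he : (e : A) = 1 + b ⬝ᵥ u) :
    (Matrix n n A)ˣ where
  val := 1 + vecMulVec u b
  inv := 1 - vecMulVec u ((↑e⁻¹ : A) • b)
  val_inv := by
    have hb : b - (↑e⁻¹ : A) • b - (b ⬝ᵥ u) • (↑e⁻¹ : A) • b = 0 := calc
      _ = b - ((1 + b ⬝ᵥ u) * ↑e⁻¹) • b := by rw [add_mul, add_smul, one_mul, mul_smul]; abel
      _ = 0 := by rw [← he, e.mul_inv, one_smul, sub_self]
    have h := congrArg (vecMulVec u) hb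
    rw [vecMulVec_sub, vecMulVec_sub, vecMulVec_zero] at h
    rw [add_mul, one_mul, mul_sub, mul_one, vecMulVec_mul_vecMulVec, ← sub_eq_zero, ← h]
    abel
  inv_val := by
    have hb : b - (↑e⁻¹ : A) • b - ((↑e⁻¹ : A) • b ⬝ᵥ u) • b = 0 := calc
      _ = b - (↑e⁻¹ * (1 + b ⬝ᵥ u)) • b := by
        rw [smul_dotProduct, smul_eq_mul, mul_add, mul_one, add_smul]; abel
      _ = 0 := by rw [← he, e.inv_mul, one_smul, sub_self]
    have h := congrArg (vecMulVec u) hb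
    rw [vecMulVec_sub, vecMulVec_sub, vecMulVec_zero] at h
    rw [sub_mul, one_mul, mul_add, mul_one, vecMulVec_mul_vecMulVec, ← sub_eq_zero, ← h]
    abel

@[simp]
theorem val_oneAddVecMulVecUnit (u b : n → A) (e : Aˣ) (he : (e : A) = 1 + b ⬝ᵥ u) :
    (oneAddVecMulVecUnit u b e he : Matrix n n A) = 1 + vecMulVec u b :=
  rfl

theorem oneAddVecMulVec_mulVec_of_dotProduct_eq_one {u b w : n → A} (hw : b ⬝ᵥ w = 1) :
    (1 + vecMulVec u b) *ᵥ w = w + u := by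
  rw [add_mulVec, one_mulVec, vecMulVec_mulVec, hw, MulOpposite.op_one, one_smul]

end Ring

section Normed

variable {A : Type*} [NormedRing A] [NormedAlgebra ℝ A] [CompleteSpace A]
  {n : Type*} [Fintype n] [DecidableEq n]

theorem exists_mem_connectedComponent_one_val_eq_one_add_vecMulVec {u b : n → A}
    (h : ‖b ⬝ᵥ u‖ < 1) :
    ∃ T : (Matrix n n A)ˣ, T ∈ connectedComponent 1 ∧ (T : Matrix n n A) = 1 + vecMulVec u b := by
  let γ : C(unitInterval, A) := ⟨fun s => 1 + b ⬝ᵥ ((s : ℝ) • u), by fun_prop⟩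
  have hγ (s : unitInterval) : IsUnit (γ s) := by
    refine isUnit_one_add_of_norm_lt_one ?_
    rw [dotProduct_smul, norm_smul, Real.norm_of_nonneg s.2.1]
    exact (mul_le_of_le_one_left (norm_nonneg _) s.2.2).trans_lt h
  have hγ_unit : Continuous fun s => (hγ s).unit := ContinuousMap.continuous_isUnit_unit hγ
  let f (s : unitInterval) : (Matrix n n A)ˣ :=
    oneAddVecMulVecUnit ((s : ℝ) • u) b (hγ s).unit (hγ s).unit_spec
  have hf : Continuous f := by
    refine Units.continuous_iff.2 ⟨?_, ?_⟩
    · exact continuous_const.add ((continuous_subtype_val.smul continuous_const).matrix_vecMulVec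
        continuous_const)
    · refine continuous_const.sub ((continuous_subtype_val.smul continuous_const).matrix_vecMulVec
        ?_)
      exact (Units.continuous_val.comp (continuous_inv.comp hγ_unit)).smul continuous_const
  have h0 : f 0 = 1 := Units.ext (by simp [f])
  refine ⟨f 1, ?_, by simp [f]⟩
  rw [← h0]
  exact (isPreconnected_range hf).subset_connectedComponent ⟨0, rfl⟩ ⟨1, rfl⟩

end Normed

end Matrix

section Orbit

variable {A : Type*} {n : ℕ}

theorem IsLeftUnimodular.units_mulVec [Ring A] {v : Fin n → A} (hv : IsLeftUnimodular v)
    (T : (Matrix (Fin n) (Fin n) A)ˣ) :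
    IsLeftUnimodular ((T : Matrix (Fin n) (Fin n) A) *ᵥ v) := by
  obtain ⟨b, hb⟩ := hv
  refine ⟨b ᵥ* (↑T⁻¹ : Matrix (Fin n) (Fin n) A), ?_⟩
  change b ᵥ* (↑T⁻¹ : Matrix (Fin n) (Fin n) A) ⬝ᵥ (↑T *ᵥ v) = 1
  rw [dotProduct_mulVec, vecMul_vecMul, T.inv_mul, vecMul_one]
  exact hb

section Topological

variable [Ring A] [TopologicalSpace A]

def glZeroOrbit (v : Fin n → A) : Set (Fin n → A) :=
  {w | ∃ T : (Matrix (Fin n) (Fin n) A)ˣ,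
    T ∈ connectedComponent 1 ∧ (T : Matrix (Fin n) (Fin n) A) *ᵥ v = w}

theorem mem_glZeroOrbit_self (v : Fin n → A) : v ∈ glZeroOrbit v :=
  ⟨1, mem_connectedComponent, one_mulVec v⟩

theorem IsLeftUnimodular.of_mem_glZeroOrbit {v w : Fin n → A} (hv : IsLeftUnimodular v)
    (hw : w ∈ glZeroOrbit v) : IsLeftUnimodular w := by
  obtain ⟨T, -, rfl⟩ := hw
  exact hv.units_mulVec T

variable [IsTopologicalRing A]

theorem mem_glZeroOrbit_trans {v w x : Fin n → A} (hw : w ∈ glZeroOrbit v)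
    (hx : x ∈ glZeroOrbit w) : x ∈ glZeroOrbit v := by
  obtain ⟨S, hS, rfl⟩ := hw
  obtain ⟨T, hT, rfl⟩ := hx
  exact ⟨T * S, mul_mem_connectedComponent_one hT hS, by rw [Units.val_mul, mulVec_mulVec]⟩

theorem mem_glZeroOrbit_symm {v w : Fin n → A} (hw : w ∈ glZeroOrbit v) : v ∈ glZeroOrbit w := by
  obtain ⟨T, hT, rfl⟩ := hw
  exact ⟨T⁻¹, inv_mem_connectedComponent_one hT, by rw [mulVec_mulVec, T.inv_mul, one_mulVec]⟩

end Topological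

section Normed

variable [NormedRing A] [NormedAlgebra ℝ A] [CompleteSpace A]

theorem isOpen_glZeroOrbit {v : Fin n → A} (hv : IsLeftUnimodular v) :
    IsOpen (glZeroOrbit v) := by
  refine isOpen_iff_mem_nhds.2 fun w hw => ?_
  obtain ⟨b, hb⟩ := hv.of_mem_glZeroOrbit hw
  have hlim : Tendsto (fun w' => b ⬝ᵥ (w' - w)) (𝓝 w) (𝓝 0) :=
    (continuous_const.dotProduct (continuous_id.sub continuous_const)).tendsto' w 0 (by simp)
  filter_upwards [hlim (Metric.ball_mem_nhds 0 one_pos)] with w' hw'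
  rw [Set.mem_preimage, mem_ball_zero_iff] at hw'
  obtain ⟨T, hT, hTval⟩ := exists_mem_connectedComponent_one_val_eq_one_add_vecMulVec hw'
  refine mem_glZeroOrbit_trans hw ⟨T, hT, ?_⟩
  rw [hTval, oneAddVecMulVec_mulVec_of_dotProduct_eq_one hb, add_sub_cancel]

theorem isClopen_preimage_glZeroOrbit {v : Fin n → A} (hv : IsLeftUnimodular v) :
    IsClopen (Subtype.val ⁻¹' glZeroOrbit v : Set {w : Fin n → A // IsLeftUnimodular w}) := by
  refine ⟨?_, (isOpen_glZeroOrbit hv).preimage continuous_subtype_val⟩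
  refine isOpen_compl_iff.1 (isOpen_iff_forall_mem_open.2 fun w hw => ?_)
  refine ⟨Subtype.val ⁻¹' glZeroOrbit w.1,
    fun x hxw hxv => hw (mem_glZeroOrbit_trans hxv (mem_glZeroOrbit_symm hxw)),
    (isOpen_glZeroOrbit w.2).preimage continuous_subtype_val, mem_glZeroOrbit_self w.1⟩

theorem glZeroActsTransitively_of_isConnected
    (h : IsConnected {w : Fin n → A | IsLeftUnimodular w}) : GLZeroActsTransitively A n := by
  intro v w hv hw
  have : ConnectedSpace {w : Fin n → A // IsLeftUnimodular w} :=
    isConnected_iff_connectedSpace.1 h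
  have huniv := (isClopen_preimage_glZeroOrbit hv).eq_univ ⟨⟨v, hv⟩, mem_glZeroOrbit_self v⟩
  exact Set.eq_univ_iff_forall.1 huniv ⟨w, hw⟩

end Normed

end Orbit

theorem stmt_14_general {A : Type*} [NormedRing A]
    [NormedAlgebra ℂ A] [CompleteSpace A]
    {n : ℕ} (v : Fin n → A) (hv : IsLeftUnimodular v)
    (O : Set (Fin n → A))
    (hO : O = {w | ∃ T : (Matrix (Fin n) (Fin n) A)ˣ,
      T ∈ connectedComponent (1 : (Matrix (Fin n) (Fin n) A)ˣ) ∧ T.val.mulVec v = w}) :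
    IsOpen (Subtype.val ⁻¹' O : Set {w : Fin n → A // IsLeftUnimodular w}) ∧
      IsClosed (Subtype.val ⁻¹' O : Set {w : Fin n → A // IsLeftUnimodular w}) ∧
      (IsConnected {w : Fin n → A | IsLeftUnimodular w} →
        GLZeroActsTransitively A n) := by
  let := NormedAlgebra.restrictScalars ℝ ℂ A
  subst hO
  have hclopen := isClopen_preimage_glZeroOrbit hv
  exact ⟨hclopen.isOpen, hclopen.isClosed, glZeroActsTransitively_of_isConnected⟩

/-- For a unital C*-algebra `A`, `n ≥ 1` and `v ∈ Lg_n(A)`, the orbit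
`GL_n^0(A)·v` is both open and closed in `Lg_n(A)` (subspace topology from `Aⁿ`).
Consequently connectedness of `Lg_n(A)` implies transitivity of the `GL_n^0(A)`-action. -/
theorem stmt_14 {A : Type*} [NormedRing A] [StarRing A] [CStarRing A]
    [NormedAlgebra ℂ A] [CompleteSpace A] [StarModule ℂ A]
    {n : ℕ} (hn : 1 ≤ n) (v : Fin n → A) (hv : IsLeftUnimodular v)
    (O : Set (Fin n → A))
    (hO : O = {w | ∃ T : (Matrix (Fin n) (Fin n) A)ˣ,
      T ∈ connectedComponent (1 : (Matrix (Fin n) (Fin n) A)ˣ) ∧ T.val.mulVec v = w}) :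
    IsOpen (Subtype.val ⁻¹' O : Set {w : Fin n → A // IsLeftUnimodular w}) ∧
      IsClosed (Subtype.val ⁻¹' O : Set {w : Fin n → A // IsLeftUnimodular w}) ∧
      (IsConnected {w : Fin n → A | IsLeftUnimodular w} →
        GLZeroActsTransitively A n) :=
  stmt_14_general v hv O hO
end

section
/- Let $\alpha : G \to \mathrm{Aut}(A)$ be an action of a finite group $G$ on a unital, separable C*-algebra $A$ with the Rokhlin property: for every finite $F \subset A$ and $\epsilon > 0$ there are mutually orthogonal projections $\{e_g\}_{g \in G}$ in $A$ with $\alpha_g(e_h) = e_{gh}$, $\|e_g a - a e_g\| < \epsilon$ for all $a \in F$, and $\sum_g e_g = 1$. Suppose also there are unital linear contractions $\psi_j : A \to A^\alpha$ that are asymptotically multiplicative and asymptotically the identity on $A^\alpha$ (Gardella). Then $csr(A^\alpha) \leq csr(A)$ and $gsr(A^\alpha) \leq gsr(A)$. -/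
/-- The connected stable rank. -/
noncomputable def csr (A : Type*) [Ring A] [TopologicalSpace A] : ℕ∞ :=
  sInf {n : ℕ∞ | 1 ≤ n ∧ ∀ m : ℕ, n ≤ (m : ℕ∞) → GLZeroActsTransitively A m}

/-- The Rokhlin property for an action of a finite group `G` on a unital C*-algebra `A`:
for every finite `F ⊆ A` and `ε > 0` there are mutually orthogonal projections
`{e_g}_{g ∈ G}` with `α_g (e_h) = e_{gh}`, `‖e_g a - a e_g‖ < ε` for `a ∈ F`, and
`∑ e_g = 1`. -/
def RokhlinProperty {A : Type*} [NormedRing A] [StarRing A] [NormedAlgebra ℂ A]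
    {G : Type*} [Group G] [Fintype G] (α : G →* (A ≃ₐ[ℂ] A)) : Prop :=
  ∀ (F : Finset A) (ε : ℝ), 0 < ε →
    ∃ e : G → A,
      (∀ g, star (e g) = e g ∧ e g * e g = e g) ∧
      (∀ g h, g ≠ h → e g * e h = 0) ∧
      (∀ g h, α g (e h) = e (g * h)) ∧
      (∀ g, ∀ a ∈ F, ‖e g * a - a * e g‖ < ε) ∧
      ∑ g : G, e g = 1

open Filter Topology

theorem isUnit_of_isUnit_mul_of_isUnit_mul {M : Type*} [Monoid M] {a b : M}
    (hab : IsUnit (a * b)) (hba : IsUnit (b * a)) : IsUnit a := by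
  obtain ⟨u, hu⟩ := hab
  obtain ⟨v, hv⟩ := hba
  have hright : a * (b * ↑u⁻¹) = 1 := by rw [← mul_assoc, ← hu, u.mul_inv]
  have hleft : (↑v⁻¹ * b) * a = 1 := by rw [mul_assoc, ← hv, v.inv_mul]
  rw [left_inv_eq_right_inv hleft hright] at hleft
  exact isUnit_iff_exists.2 ⟨_, hright, hleft⟩

theorem connectedComponent_one_subset_closure_of_mem_nhds {G : Type*} [Group G] [TopologicalSpace G]
    [IsTopologicalGroup G] {U : Set G} (hU : U ∈ 𝓝 1) :
    connectedComponent (1 : G) ⊆ Subgroup.closure U := by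
  have hopen : IsOpen (Subgroup.closure U : Set G) :=
    Subgroup.isOpen_of_mem_nhds _ (mem_of_superset hU Subgroup.subset_closure)
  exact IsClopen.connectedComponent_subset ⟨Subgroup.isClosed_of_isOpen _ hopen, hopen⟩
    (one_mem _)

theorem Units.exists_mem_connectedComponent_one_of_norm_sub_one_lt {C : Type*} [NormedRing C]
    [CompleteSpace C] [NormedSpace ℝ C] {a : C} (ha : ‖a - 1‖ < 1) :
    ∃ u : Cˣ, (u : C) = a ∧ u ∈ connectedComponent 1 := by
  have hball : Metric.ball (1 : C) 1 ⊆ Set.range ((↑) : Cˣ → C) := fun x hx =>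
    ⟨Units.oneSub (1 - x) (by rwa [← dist_eq_norm', ← Metric.mem_ball]), sub_sub_cancel 1 x⟩
  have hconn : IsPreconnected (((↑) : Cˣ → C) ⁻¹' Metric.ball 1 1) := by
    rw [← Units.isOpenEmbedding_val.isInducing.isPreconnected_image,
      Set.image_preimage_eq_of_subset hball]
    exact (convex_ball 1 1).isPreconnected
  obtain ⟨u, hu⟩ := hball (mem_ball_iff_norm.2 ha)
  exact ⟨u, hu, hconn.subset_connectedComponent (by simp) (mem_ball_iff_norm.2 (hu ▸ ha))⟩

section

variable {B C : Type*} [NormedRing B] [NormedRing C]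

structure AsymptoticallyMultiplicative (φ : ℕ → B →+ C) : Prop where
  map_one : ∀ j, φ j 1 = 1
  norm_map_le : ∀ j b, ‖φ j b‖ ≤ ‖b‖
  tendsto_map_mul_sub :
    ∀ a b, Tendsto (fun j => φ j (a * b) - φ j a * φ j b) atTop (𝓝 0)

namespace AsymptoticallyMultiplicative

variable {φ : ℕ → B →+ C}

theorem isBoundedUnder_norm_map (hφ : AsymptoticallyMultiplicative φ) (b : B) :
    IsBoundedUnder (· ≤ ·) atTop ((‖·‖) ∘ fun j => φ j b) :=
  isBoundedUnder_of ⟨‖b‖, fun j => hφ.norm_map_le j b⟩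

theorem tendsto_mul_sub_map_mul (hφ : AsymptoticallyMultiplicative φ) {x y : ℕ → C} {a b : B}
    (hx : Tendsto (fun j => x j - φ j a) atTop (𝓝 0))
    (hy : Tendsto (fun j => y j - φ j b) atTop (𝓝 0)) :
    Tendsto (fun j => x j * y j - φ j (a * b)) atTop (𝓝 0) := by
  have key : ∀ j, x j * y j - φ j (a * b) =
      (x j - φ j a) * (y j - φ j b) + (x j - φ j a) * φ j b + φ j a * (y j - φ j b)
        - (φ j (a * b) - φ j a * φ j b) := fun j => by noncomm_ring
  simp_rw [key]
  simpa using (((hx.mul hy).add (hx.zero_mul_isBoundedUnder_le (hφ.isBoundedUnder_norm_map b))).add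
    (isBoundedUnder_le_mul_tendsto_zero (hφ.isBoundedUnder_norm_map a) hy)).sub
    (hφ.tendsto_map_mul_sub a b)

theorem tendsto_mul_of_tendsto_sub_map (hφ : AsymptoticallyMultiplicative φ) {ι : C → B}
    (hι : ∀ c, Tendsto (fun j => φ j (ι c)) atTop (𝓝 c)) {x : ℕ → C} {a : B} {c d : C}
    (hx : Tendsto (fun j => x j - φ j a) atTop (𝓝 0)) (h : a * ι c = ι d) :
    Tendsto (fun j => x j * c) atTop (𝓝 d) := by
  have hc : Tendsto (fun j => c - φ j (ι c)) atTop (𝓝 0) := by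
    simpa using (hι c).const_sub c
  have := hφ.tendsto_mul_sub_map_mul hx hc
  rw [h] at this
  simpa using this.add (hι d)

theorem eventually_isUnit_map (hφ : AsymptoticallyMultiplicative φ) [CompleteSpace C] (u : Bˣ) :
    ∀ᶠ j in atTop, IsUnit (φ j u) := by
  have hinv : ∀ a b : B, a * b = 1 → ∀ᶠ j in atTop, IsUnit (φ j a * φ j b) := fun a b hab => by
    have h := (hφ.tendsto_map_mul_sub a b).const_sub 1
    simp only [hab, hφ.map_one, sub_zero, sub_sub_cancel] at h
    exact h (Units.isOpen.mem_nhds isUnit_one)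
  filter_upwards [hinv _ _ u.mul_inv, hinv _ _ u.inv_mul] with j h₁ h₂
  exact isUnit_of_isUnit_mul_of_isUnit_mul h₁ h₂

theorem exists_units_tendsto_sub_map (hφ : AsymptoticallyMultiplicative φ) [CompleteSpace C]
    [NormedSpace ℝ C] {u : Bˣ} (hu : u ∈ connectedComponent 1) :
    ∃ U : ℕ → Cˣ, (∀ j, U j ∈ connectedComponent 1) ∧
      Tendsto (fun j => (U j : C) - φ j u) atTop (𝓝 0) := by
  have hbase : ∀ v : Bˣ, ‖(v : B) - 1‖ < 1 → ∃ U : ℕ → Cˣ, (∀ j, U j ∈ connectedComponent 1) ∧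
      Tendsto (fun j => (U j : C) - φ j v) atTop (𝓝 0) := fun v hv => by
    have hnear : ∀ j, ‖φ j v - 1‖ < 1 := fun j => by
      simpa [map_sub, hφ.map_one] using (hφ.norm_map_le j (v - 1)).trans_lt hv
    choose U hU using fun j => Units.exists_mem_connectedComponent_one_of_norm_sub_one_lt (hnear j)
    exact ⟨U, fun j => (hU j).2, by simp [fun j => (hU j).1]⟩
  -- a symmetric neighbourhood of `1`, so that the inverse step of the induction is a base case
  let V : Set Bˣ := {v | ‖(v : B) - 1‖ < 1 ∧ ‖((v⁻¹ : Bˣ) : B) - 1‖ < 1}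
  have hV : V ∈ 𝓝 1 := by
    refine IsOpen.mem_nhds ?_ (by simp [V])
    exact (isOpen_lt (Units.continuous_val.sub continuous_const).norm continuous_const).inter
      (isOpen_lt (Units.continuous_coe_inv.sub continuous_const).norm continuous_const)
  have hclosure := connectedComponent_one_subset_closure_of_mem_nhds hV hu
  clear hu
  induction hclosure using Subgroup.closure_induction'' with
  | mem v hv => exact hbase v hv.1
  | inv_mem v hv => exact hbase v⁻¹ hv.2
  | one => exact ⟨fun _ => 1, fun _ => mem_connectedComponent, by simp [hφ.map_one]⟩
  | mul v w _ _ ihv ihw =>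
    obtain ⟨U, hUcc, hU⟩ := ihv
    obtain ⟨W, hWcc, hW⟩ := ihw
    exact ⟨fun j => U j * W j, fun j => mul_mem_connectedComponent_one (hUcc j) (hWcc j),
      by simpa using hφ.tendsto_mul_sub_map_mul hU hW⟩

end AsymptoticallyMultiplicative

end

section MatrixNorm

open Matrix
attribute [local instance] Matrix.linftyOpSeminormedAddCommGroup
  Matrix.linftyOpNormedAddCommGroup Matrix.linftyOpNormedRing Matrix.linftyOpNormedSpace

theorem Matrix.linfty_opNorm_le_of_norm_apply_le {m n α β : Type*} [Fintype m] [Fintype n]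
    [SeminormedAddCommGroup α] [SeminormedAddCommGroup β] {X : Matrix m n α} {Y : Matrix m n β}
    (h : ∀ i k, ‖X i k‖ ≤ ‖Y i k‖) : ‖X‖ ≤ ‖Y‖ := by
  rw [linfty_opNorm_def, linfty_opNorm_def, NNReal.coe_le_coe]
  exact Finset.sup_mono_fun fun i _ => Finset.sum_le_sum fun k _ => h i k

variable {n : Type*} [Fintype n] [DecidableEq n] {B C : Type*} [NormedRing B] [NormedRing C]

theorem eventually_exists_mem_connectedComponent_mulVec_eq [CompleteSpace C] [NormedSpace ℝ C]
    {w b : n → C} (hb : ∑ i, b i * w i = 1) :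
    ∀ᶠ x in 𝓝 w, ∃ E : (Matrix n n C)ˣ, E ∈ connectedComponent 1 ∧ (E : Matrix n n C) *ᵥ x = w := by
  have : @CompleteSpace (Matrix n n C) PseudoMetricSpace.toUniformSpace :=
    Matrix.instCompleteSpace _ _ _
  let X : (n → C) → Matrix n n C := fun x => 1 + vecMulVec (x - w) b
  have hX : Continuous X := continuous_const.add <| continuous_matrix fun i k =>
    ((continuous_apply i).sub continuous_const).mul continuous_const
  have hXw : X w = 1 := by simp [X]
  have hXmulVec : ∀ x, X x *ᵥ w = x := fun x => by
    have hbw : b ⬝ᵥ w = 1 := hb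
    simp [X, add_mulVec, vecMulVec_mulVec, hbw]
  have hnear : X ⁻¹' Metric.ball 1 1 ∈ 𝓝 w :=
    hX.continuousAt.preimage_mem_nhds (by rw [hXw]; exact Metric.ball_mem_nhds 1 one_pos)
  filter_upwards [hnear] with x hx
  obtain ⟨u, hu, hucc⟩ :=
    Units.exists_mem_connectedComponent_one_of_norm_sub_one_lt (mem_ball_iff_norm.1 hx)
  exact ⟨u⁻¹, inv_mem_connectedComponent_one hucc,
    by rw [← hXmulVec x, ← hu, mulVec_mulVec, Units.inv_mul, one_mulVec]⟩

namespace AsymptoticallyMultiplicative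

variable {φ : ℕ → B →+ C}

theorem mapMatrix (hφ : AsymptoticallyMultiplicative φ) :
    AsymptoticallyMultiplicative fun j => ((φ j).mapMatrix : Matrix n n B →+ Matrix n n C) where
  map_one j := Matrix.map_one _ (map_zero _) (hφ.map_one j)
  norm_map_le j X := Matrix.linfty_opNorm_le_of_norm_apply_le fun i k => hφ.norm_map_le j (X i k)
  tendsto_map_mul_sub X Y := tendsto_pi_nhds.2 fun i => tendsto_pi_nhds.2 fun k => by
    simpa [Matrix.mul_apply, Finset.sum_sub_distrib] using
      tendsto_finsetSum Finset.univ fun l _ => hφ.tendsto_map_mul_sub (X i l) (Y l k)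

end AsymptoticallyMultiplicative

theorem tendsto_mapMatrix_map {m n' : Type*} {φ : ℕ → B →+ C} {ι : C → B}
    (hι : ∀ c, Tendsto (fun j => φ j (ι c)) atTop (𝓝 c)) (Y : Matrix m n' C) :
    Tendsto (fun j => (φ j).mapMatrix (Y.map ι)) atTop (𝓝 Y) :=
  tendsto_pi_nhds.2 fun i => tendsto_pi_nhds.2 fun k => hι (Y i k)

theorem IsLeftUnimodular.map {R S : Type*} [Ring R] [Ring S] (f : R →+* S) {m : ℕ}
    {v : Fin m → R} (hv : IsLeftUnimodular v) : IsLeftUnimodular (f ∘ v) := by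
  obtain ⟨b, hb⟩ := hv
  exact ⟨f ∘ b, by simpa [map_sum, map_mul] using congrArg f hb⟩

namespace AsymptoticallyMultiplicative

variable {φ : ℕ → B →+ C} {ι : C → B}

theorem tendsto_mulVec (hφ : AsymptoticallyMultiplicative φ)
    (hι : ∀ c, Tendsto (fun j => φ j (ι c)) atTop (𝓝 c)) {M : ℕ → Matrix n n C}
    {T : Matrix n n B} (hM : Tendsto (fun j => M j - (φ j).mapMatrix T) atTop (𝓝 0))
    {v w : n → C} (h : T *ᵥ (ι ∘ v) = ι ∘ w) : Tendsto (fun j => M j *ᵥ v) atTop (𝓝 w) := by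
  -- vectors are encoded as square matrices with equal columns, `x` being the diagonal of
  -- `replicateCol n x`
  have hcol : T * (replicateCol n v).map ι = (replicateCol n w).map ι := by
    change T * replicateCol n (ι ∘ v) = replicateCol n (ι ∘ w)
    rw [← replicateCol_mulVec, h]
  have := hφ.mapMatrix.tendsto_mul_of_tendsto_sub_map (tendsto_mapMatrix_map hι) hM hcol
  simp only [← replicateCol_mulVec] at this
  exact (continuous_id.matrix_diag.tendsto _).comp this

end AsymptoticallyMultiplicative

variable [CompleteSpace C] [NormedSpace ℝ C] {φ : ℕ → B →+ C}

theorem GLZeroActsTransitively.of_asymptoticallyMultiplicative (ι : C →+* B)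
    (hφ : AsymptoticallyMultiplicative φ) (hι : ∀ c, Tendsto (fun j => φ j (ι c)) atTop (𝓝 c))
    {m : ℕ} (hB : GLZeroActsTransitively B m) : GLZeroActsTransitively C m := by
  have : @CompleteSpace (Matrix (Fin m) (Fin m) C) PseudoMetricSpace.toUniformSpace :=
    Matrix.instCompleteSpace _ _ _
  intro v w hv hw
  obtain ⟨T, hTcc, hT⟩ := hB _ _ (hv.map ι) (hw.map ι)
  obtain ⟨U, hUcc, hU⟩ := hφ.mapMatrix.exists_units_tendsto_sub_map hTcc
  obtain ⟨b, hb⟩ := hw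
  obtain ⟨j, E, hEcc, hE⟩ := ((hφ.tendsto_mulVec hι hU hT).eventually
    (eventually_exists_mem_connectedComponent_mulVec_eq hb)).exists
  exact ⟨E * U j, mul_mem_connectedComponent_one hEcc (hUcc j),
    by rw [Units.val_mul, ← mulVec_mulVec, hE]⟩

theorem GLActsTransitively.of_asymptoticallyMultiplicative (ι : C →+* B)
    (hφ : AsymptoticallyMultiplicative φ) (hι : ∀ c, Tendsto (fun j => φ j (ι c)) atTop (𝓝 c))
    {m : ℕ} (hB : GLActsTransitively B m) : GLActsTransitively C m := by
  have : @CompleteSpace (Matrix (Fin m) (Fin m) C) PseudoMetricSpace.toUniformSpace :=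
    Matrix.instCompleteSpace _ _ _
  intro v w hv hw
  obtain ⟨T, hT⟩ := hB _ _ (hv.map ι) (hw.map ι)
  have hconv := hφ.tendsto_mulVec hι (M := fun j => (φ j).mapMatrix T) (by simp) hT
  obtain ⟨b, hb⟩ := hw
  obtain ⟨j, ⟨U, hU⟩, E, -, hE⟩ := ((hφ.mapMatrix.eventually_isUnit_map T).and
    (hconv.eventually (eventually_exists_mem_connectedComponent_mulVec_eq hb))).exists
  exact ⟨E * U, by rw [Units.val_mul, ← mulVec_mulVec, hU, hE]⟩

end MatrixNorm

theorem csr_le_csr {A B : Type*} [Ring A] [TopologicalSpace A] [Ring B] [TopologicalSpace B]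
    (h : ∀ m, GLZeroActsTransitively A m → GLZeroActsTransitively B m) : csr B ≤ csr A :=
  sInf_le_sInf fun _ hn => ⟨hn.1, fun m hm => h m (hn.2 m hm)⟩

theorem gsr_le_gsr {A B : Type*} [Ring A] [Ring B]
    (h : ∀ m, GLActsTransitively A m → GLActsTransitively B m) : gsr B ≤ gsr A :=
  sInf_le_sInf fun _ hn => ⟨hn.1, fun m hm => h m (hn.2 m hm)⟩

open scoped CStarAlgebra in
theorem isClosed_fixedSubalgebra {A G : Type*} [CStarAlgebra A] [Group G]
    (α : G →* (A ≃ₐ[ℂ] A)) (hstar : ∀ g (a : A), α g (star a) = star (α g a)) :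
    IsClosed (fixedSubalgebra α : Set A) := by
  have hcont : ∀ g, Continuous (α g) := fun g =>
    map_continuous (StarAlgEquiv.ofAlgEquiv (α g) (hstar g))
  have heq : (fixedSubalgebra α : Set A) = ⋂ g, {a | α g a = a} := by
    ext; simp [fixedSubalgebra]
  rw [heq]
  exact isClosed_iInter fun g => isClosed_eq (hcont g) continuous_id

theorem stmt_18_general {A : Type*} [NormedRing A] [StarRing A] [CStarRing A]
    [NormedAlgebra ℂ A] [CompleteSpace A] [StarModule ℂ A]
    {G : Type*} [Group G] (α : G →* (A ≃ₐ[ℂ] A))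
    (hstar : ∀ g (a : A), α g (star a) = star (α g a))
    (ψ : ℕ → A →ₗ[ℂ] A)
    (hψfix : ∀ j a, ψ j a ∈ fixedSubalgebra α)
    (hψone : ∀ j, ψ j 1 = 1)
    (hψcontr : ∀ j a, ‖ψ j a‖ ≤ ‖a‖)
    (hψmul : ∀ a b : A,
      Filter.Tendsto (fun j => ‖ψ j (a * b) - ψ j a * ψ j b‖) Filter.atTop (nhds 0))
    (hψid : ∀ a ∈ fixedSubalgebra α,
      Filter.Tendsto (fun j => ‖ψ j a - a‖) Filter.atTop (nhds 0)) :
    csr (fixedSubalgebra α) ≤ csr A ∧ gsr (fixedSubalgebra α) ≤ gsr A := by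
  set R := fixedSubalgebra α
  have : CompleteSpace R := by
    let _ : CStarAlgebra A := { }
    exact (isClosed_fixedSubalgebra α hstar).completeSpace_coe
  let φ : ℕ → A →+ R := fun j => (ψ j).toAddMonoidHom.codRestrict R (hψfix j)
  have hφ : AsymptoticallyMultiplicative φ :=
    { map_one := fun j => Subtype.ext (hψone j)
      norm_map_le := hψcontr
      tendsto_map_mul_sub := fun a b => tendsto_zero_iff_norm_tendsto_zero.2 (hψmul a b) }
  have hι : ∀ c : R, Tendsto (fun j => φ j c) atTop (𝓝 c) := fun c =>
    tendsto_iff_norm_sub_tendsto_zero.2 (hψid c c.2)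
  exact ⟨csr_le_csr fun _ => .of_asymptoticallyMultiplicative R.val.toRingHom hφ hι,
    gsr_le_gsr fun _ => .of_asymptoticallyMultiplicative R.val.toRingHom hφ hι⟩

/-- Let `α : G → Aut(A)` be an action of a finite group on a unital separable C*-algebra
`A` with the Rokhlin property, and suppose there are unital linear contractions
`ψ_j : A → A^α` that are asymptotically multiplicative and asymptotically the identity on
`A^α` (Gardella).  Then `csr (A^α) ≤ csr A` and `gsr (A^α) ≤ gsr A`. -/
theorem stmt_18 {A : Type*} [NormedRing A] [StarRing A] [CStarRing A]
    [NormedAlgebra ℂ A] [CompleteSpace A] [StarModule ℂ A]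
    [TopologicalSpace.SeparableSpace A]
    {G : Type*} [Group G] [Fintype G] (α : G →* (A ≃ₐ[ℂ] A))
    (hstar : ∀ g (a : A), α g (star a) = star (α g a))
    (hrok : RokhlinProperty α)
    (ψ : ℕ → A →ₗ[ℂ] A)
    (hψfix : ∀ j a, ψ j a ∈ fixedSubalgebra α)
    (hψone : ∀ j, ψ j 1 = 1)
    (hψcontr : ∀ j a, ‖ψ j a‖ ≤ ‖a‖)
    (hψmul : ∀ a b : A,
      Filter.Tendsto (fun j => ‖ψ j (a * b) - ψ j a * ψ j b‖) Filter.atTop (nhds 0))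
    (hψid : ∀ a ∈ fixedSubalgebra α,
      Filter.Tendsto (fun j => ‖ψ j a - a‖) Filter.atTop (nhds 0)) :
    csr (fixedSubalgebra α) ≤ csr A ∧ gsr (fixedSubalgebra α) ≤ gsr A :=
  stmt_18_general α hstar ψ hψfix hψone hψcontr hψmul hψid
end
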